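/- Extraction of the discrete logarithm from two related forgeries: in a cyclic group of prime order p with generator G, if σ·G + ε·Y = R and σ'·G + ε'·Y = R with ε ≠ ε' (ε, ε', σ, σ' ∈ Z_p), then Y = ((σ − σ')·(ε' − ε)^{-1})·G, i.e., (σ − σ')·(ε' − ε)^{-1} is the discrete logarithm of Y with respect to G. -/
import Mathlib

/-- Extraction of the discrete logarithm from two related forgeries: in a cyclic group
of prime order `p` with generator `G` (so every element is killed by `p`), if
`σ • G + ε • Y = R` and `σ' • G + ε' • Y = R` with `ε ≠ ε'`, then
`Y = ((σ - σ') * (ε' - ε)⁻¹) • G`. -/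
theorem dlog_from_two_forgeries {A : Type*} [AddCommGroup A]
    (p : ℕ) [Fact p.Prime] (G : A) (hexp : ∀ a : A, p • a = 0)
    (Y R : A) (σ σ' ε ε' : ZMod p)
    (h1 : σ.val • G + ε.val • Y = R)
    (h2 : σ'.val • G + ε'.val • Y = R)
    (hne : ε ≠ ε') :
    Y = ((σ - σ') * (ε' - ε)⁻¹).val • G := by
  letI : Module (ZMod p) A := AddCommGroup.zmodModule hexp
  have key : ∀ (z : ZMod p) (a : A), z.val • a = z • a := by
    intro z a
    have hz : z = ((z.val : ℕ) : ZMod p) := (ZMod.natCast_rightInverse z).symm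
    rw [hz, Nat.cast_smul_eq_nsmul, ZMod.val_natCast_of_lt (ZMod.val_lt z)]
  simp only [key] at h1 h2 ⊢
  have hd : ε' - ε ≠ 0 := sub_ne_zero.mpr (Ne.symm hne)
  have h3 : (σ - σ') • G = (ε' - ε) • Y := by
    rw [sub_smul, sub_smul]
    have := h1.trans h2.symm
    abel_nf
    linear_combination (norm := abel_nf) this
  have : ((ε' - ε)⁻¹ * (ε' - ε)) • Y = ((σ - σ') * (ε' - ε)⁻¹) • G := by
    rw [mul_smul, ← h3, mul_comm, mul_smul]
  rwa [inv_mul_cancel₀ hd, one_smul] at this
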